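/- arXiv:1404.3005 — 3 statements merged into one kernel-verified Lean document; each statement's English description precedes it below -/
import Mathlib

section
/- Let p, q, r be positive integers with gcd(p,q) = 1, set a = gcd(p,r) and b = gcd(q,r). Suppose integers b₁, b₂, b₃, b₁', b₂', b₃' satisfy (q·r/(a·b))·(b₁ − b₁') − (p·r/(a·b))·(b₂ − b₂') + (p·q/(a·b))·(b₃ − b₃') = 0. Then p/a divides b₁ − b₁', q/b divides b₂ − b₂', and r/(a·b) divides b₃ − b₃'. -/
/-- With `p, q, r` positive, `gcd p q = 1`, `a = gcd p r`, `b = gcd q r`,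
if integers `b₁, b₂, b₃, b₁', b₂', b₃'` satisfy
`(q*r/(a*b))*(b₁ − b₁') − (p*r/(a*b))*(b₂ − b₂') + (p*q/(a*b))*(b₃ − b₃') = 0`,
then `p/a ∣ b₁ − b₁'`, `q/b ∣ b₂ − b₂'`, and `r/(a*b) ∣ b₃ − b₃'`. -/
theorem stmt1 (p q r : ℕ) (hp : 0 < p) (hq : 0 < q) (hr : 0 < r)
    (hpq : Nat.gcd p q = 1) (a b : ℕ) (ha : a = Nat.gcd p r) (hb : b = Nat.gcd q r)
    (b₁ b₂ b₃ b₁' b₂' b₃' : ℤ)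
    (heq : ((q * r / (a * b) : ℕ) : ℤ) * (b₁ - b₁')
         - ((p * r / (a * b) : ℕ) : ℤ) * (b₂ - b₂')
         + ((p * q / (a * b) : ℕ) : ℤ) * (b₃ - b₃') = 0) :
    ((p / a : ℕ) : ℤ) ∣ (b₁ - b₁') ∧ ((q / b : ℕ) : ℤ) ∣ (b₂ - b₂') ∧
      ((r / (a * b) : ℕ) : ℤ) ∣ (b₃ - b₃') := by
  have hap : a ∣ p := ha ▸ Nat.gcd_dvd_left p r
  have har : a ∣ r := ha ▸ Nat.gcd_dvd_right p r
  have hbq : b ∣ q := hb ▸ Nat.gcd_dvd_left q r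
  have hbr : b ∣ r := hb ▸ Nat.gcd_dvd_right q r
  have hab : Nat.Coprime a b :=
    Nat.Coprime.coprime_dvd_right hbq (Nat.Coprime.coprime_dvd_left hap hpq)
  have habr : a * b ∣ r := hab.mul_dvd_of_dvd_of_dvd har hbr
  have ha0 : 0 < a := ha ▸ Nat.gcd_pos_of_pos_left r hp
  have hb0 : 0 < b := hb ▸ Nat.gcd_pos_of_pos_left r hq
  -- abbreviations
  set P := p / a with hP
  set Q := q / b with hQ
  set R := r / (a * b) with hR
  have hpP : p = a * P := (Nat.mul_div_cancel' hap).symm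
  have hqQ : q = b * Q := (Nat.mul_div_cancel' hbq).symm
  have hrR : r = (a * b) * R := (Nat.mul_div_cancel' habr).symm
  -- coefficient factorizations
  have c1 : q * r / (a * b) = b * Q * R := by
    rw [Nat.mul_div_assoc q habr, hqQ]
  have c2 : p * r / (a * b) = a * P * R := by
    rw [Nat.mul_div_assoc p habr, hpP]
  have c3 : p * q / (a * b) = P * Q := Nat.div_mul_div_comm hap hbq ▸ rfl
  rw [c1, c2, c3] at heq
  push_cast at heq
  -- coprimality facts
  have cPQ : Nat.Coprime P Q :=
    Nat.Coprime.coprime_dvd_right (hQ ▸ Nat.div_dvd_of_dvd hbq)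
      (Nat.Coprime.coprime_dvd_left (hP ▸ Nat.div_dvd_of_dvd hap) hpq)
  have cPb : Nat.Coprime P b :=
    Nat.Coprime.coprime_dvd_right hbq
      (Nat.Coprime.coprime_dvd_left (hP ▸ Nat.div_dvd_of_dvd hap) hpq)
  have cQa : Nat.Coprime Q a :=
    (Nat.Coprime.coprime_dvd_right hap
      (Nat.Coprime.coprime_dvd_left (hQ ▸ Nat.div_dvd_of_dvd hbq) (Nat.Coprime.symm hpq)))
  have hRra : R ∣ r / a := by
    refine ⟨b, ?_⟩
    have : r / a = (a * b * R) / a := by rw [← hrR]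
    rw [this, Nat.mul_assoc, Nat.mul_div_cancel_left _ ha0, Nat.mul_comm]
  have hRrb : R ∣ r / b := by
    refine ⟨a, ?_⟩
    have : r / b = (a * b * R) / b := by rw [← hrR]
    rw [this, Nat.mul_comm a b, Nat.mul_assoc, Nat.mul_div_cancel_left _ hb0,
      Nat.mul_comm]
  have cPR : Nat.Coprime P R := by
    have h := Nat.coprime_div_gcd_div_gcd (show 0 < Nat.gcd p r from ha ▸ ha0)
    rw [← ha] at h
    exact Nat.Coprime.coprime_dvd_right hRra h
  have cQR : Nat.Coprime Q R := by
    have h := Nat.coprime_div_gcd_div_gcd (show 0 < Nat.gcd q r from hb ▸ hb0)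
    rw [← hb] at h
    exact Nat.Coprime.coprime_dvd_right hRrb h
  -- move to ℤ
  have iPQ : IsCoprime (P : ℤ) (Q : ℤ) := Nat.isCoprime_iff_coprime.mpr cPQ
  have iPb : IsCoprime (P : ℤ) (b : ℤ) := Nat.isCoprime_iff_coprime.mpr cPb
  have iPR : IsCoprime (P : ℤ) (R : ℤ) := Nat.isCoprime_iff_coprime.mpr cPR
  have iQa : IsCoprime (Q : ℤ) (a : ℤ) := Nat.isCoprime_iff_coprime.mpr cQa
  have iQR : IsCoprime (Q : ℤ) (R : ℤ) := Nat.isCoprime_iff_coprime.mpr cQR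
  refine ⟨?_, ?_, ?_⟩
  · -- P ∣ b₁ - b₁'
    have h1 : (P : ℤ) ∣ (b : ℤ) * Q * R * (b₁ - b₁') := by
      have : (b : ℤ) * Q * R * (b₁ - b₁')
          = (a : ℤ) * P * R * (b₂ - b₂') - (P : ℤ) * Q * (b₃ - b₃') := by
        linarith [heq]
      rw [this]
      exact dvd_sub (⟨(a:ℤ) * R * (b₂ - b₂'), by ring⟩) (⟨(Q:ℤ) * (b₃ - b₃'), by ring⟩)
    have cop : IsCoprime (P : ℤ) ((b : ℤ) * Q * R) :=
      ((iPb.mul_right iPQ).mul_right iPR)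
    exact cop.dvd_of_dvd_mul_left h1
  · have h1 : (Q : ℤ) ∣ (a : ℤ) * P * R * (b₂ - b₂') := by
      have : (a : ℤ) * P * R * (b₂ - b₂')
          = (b : ℤ) * Q * R * (b₁ - b₁') + (P : ℤ) * Q * (b₃ - b₃') := by
        linarith [heq]
      rw [this]
      exact dvd_add (⟨(b:ℤ) * R * (b₁ - b₁'), by ring⟩) (⟨(P:ℤ) * (b₃ - b₃'), by ring⟩)
    have cop : IsCoprime (Q : ℤ) ((a : ℤ) * P * R) :=
      ((iQa.mul_right iPQ.symm).mul_right iQR)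
    exact cop.dvd_of_dvd_mul_left h1
  · have h1 : (R : ℤ) ∣ (P : ℤ) * Q * (b₃ - b₃') := by
      have : (P : ℤ) * Q * (b₃ - b₃')
          = (a : ℤ) * P * R * (b₂ - b₂') - (b : ℤ) * Q * R * (b₁ - b₁') := by
        linarith [heq]
      rw [this]
      exact dvd_sub (⟨(a:ℤ) * P * (b₂ - b₂'), by ring⟩) (⟨(b:ℤ) * Q * (b₁ - b₁'), by ring⟩)
    have cop : IsCoprime (R : ℤ) ((P : ℤ) * Q) := (iPR.symm.mul_right iQR.symm)
    exact cop.dvd_of_dvd_mul_left h1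
end

section
/- Let a and b be distinct positive integers, let (a₁, b₁) = step(a, b), suppose a₁ ≠ b₁, and let (a₂, b₂) = step(a₁, b₁). Then a₂ + 2·b₂ = max(a, b). -/
/-- One step of the subtractive Euclidean algorithm:
`step (a,b) = (a−b, b)` if `a > b`, `step (a,b) = (b−a, a)` if `a < b`, and
`step (a,a) = (a,a)`. -/
def euclStep : ℕ × ℕ → ℕ × ℕ :=
  fun p => if p.2 < p.1 then (p.1 - p.2, p.2)
           else if p.1 < p.2 then (p.2 - p.1, p.1)
           else p

/-- For distinct positive integers `a, b`, if `(a₁, b₁) = step (a, b)`,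
`a₁ ≠ b₁`, and `(a₂, b₂) = step (a₁, b₁)`, then `a₂ + 2·b₂ = max a b`. -/
theorem stmt7 (a b : ℕ) (ha : 0 < a) (hb : 0 < b) (hab : a ≠ b)
    (a₁ b₁ : ℕ) (h₁ : (a₁, b₁) = euclStep (a, b)) (hab₁ : a₁ ≠ b₁)
    (a₂ b₂ : ℕ) (h₂ : (a₂, b₂) = euclStep (a₁, b₁)) :
    a₂ + 2 * b₂ = max a b := by
  simp only [euclStep] at h₁ h₂
  rw [Nat.max_def]
  split_ifs at h₁ h₂ ⊢ <;>
    simp only [Prod.mk.injEq, Prod.ext_iff] at h₁ h₂ <;> omega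
end

section
/- Let q be an odd prime and let M be the (q−1)×(q−1) integer matrix whose entries are M(i,j) = 1 if i = j+1 (the subdiagonal), M(i, q−2) = (−1)^{i+1} for the last column (rows indexed i = 0, …, q−2, so the last column reads −1, 1, −1, …, −1, 1 from top to bottom), and 0 otherwise. Then det M = 1, and M has multiplicative order exactly 2q: M^{2q} is the identity matrix and M^d is not the identity for any integer 1 ≤ d < 2q. -/
/-- The `(q−1)×(q−1)` integer matrix of the paper's Theorem 4: `1` on the
subdiagonal (`i = j+1`), last column (`j = q−2`) equal to `(−1)^(i+1)`
(reading `−1, 1, −1, …, −1, 1` from top to bottom), and `0` elsewhere. -/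
def paperMatrix (q : ℕ) : Matrix (Fin (q - 1)) (Fin (q - 1)) ℤ :=
  Matrix.of fun i j =>
    if (i : ℕ) = (j : ℕ) + 1 then 1
    else if (j : ℕ) = q - 2 then (-1) ^ ((i : ℕ) + 1)
    else 0

namespace Stmt10Aux

open Matrix

variable {q : ℕ}

lemma entry_eq (hq : 3 ≤ q) (i k : Fin (q - 1)) :
    paperMatrix q i k =
      (if (i : ℕ) = (k : ℕ) + 1 then (1 : ℤ) else 0) +
      (if (k : ℕ) = q - 2 then (-1) ^ ((i : ℕ) + 1) else 0) := by
  have hi := i.2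
  have hk := k.2
  show (if (i : ℕ) = (k : ℕ) + 1 then (1:ℤ)
    else if (k : ℕ) = q - 2 then (-1) ^ ((i : ℕ) + 1) else 0) = _
  by_cases h1 : (i : ℕ) = (k : ℕ) + 1
  · have h2 : (k : ℕ) ≠ q - 2 := by omega
    simp [h1, h2]
  · simp [h1]

lemma mulVec_eq (hq : 3 ≤ q) (w : Fin (q - 1) → ℤ) (i : Fin (q - 1)) :
    (paperMatrix q *ᵥ w) i =
      (if h : 0 < (i : ℕ) then w ⟨(i : ℕ) - 1, by omega⟩ else 0)
        + (-1) ^ ((i : ℕ) + 1) * w ⟨q - 2, by omega⟩ := by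
  have hi := i.2
  show (∑ k, paperMatrix q i k * w k) = _
  have : ∀ k : Fin (q - 1), paperMatrix q i k * w k =
      (if (i : ℕ) = (k : ℕ) + 1 then w k else 0) +
      (if k = (⟨q - 2, by omega⟩ : Fin (q - 1)) then (-1) ^ ((i : ℕ) + 1) * w k else 0) := by
    intro k
    rw [entry_eq hq, add_mul]
    congr 1
    · split_ifs <;> simp
    · by_cases hk2 : (k : ℕ) = q - 2
      · rw [if_pos hk2, if_pos (by rw [Fin.ext_iff]; exact hk2)]
      · rw [if_neg hk2, if_neg (fun hc => hk2 (by rw [Fin.ext_iff] at hc; exact hc)), zero_mul]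
  rw [Finset.sum_congr rfl fun k _ => this k, Finset.sum_add_distrib]
  congr 1
  · by_cases h0 : 0 < (i : ℕ)
    · rw [dif_pos h0]
      rw [Finset.sum_eq_single (⟨(i : ℕ) - 1, by omega⟩ : Fin (q - 1))]
      · rw [if_pos (by simp; omega)]
      · intro k _ hk
        rw [if_neg]
        intro h
        exact hk (by rw [Fin.ext_iff]; simp; omega)
      · intro h; exact absurd (Finset.mem_univ _) h
    · rw [dif_neg h0]
      apply Finset.sum_eq_zero
      intro k _
      rw [if_neg (by omega)]
  · rw [Finset.sum_eq_single (⟨q - 2, by omega⟩ : Fin (q - 1))]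
    · rw [if_pos rfl]
    · intro k _ hk; exact if_neg hk
    · intro h; exact absurd (Finset.mem_univ _) h

lemma shift (hq : 3 ≤ q) (j : Fin (q - 1)) (h : (j : ℕ) + 1 < q - 1) :
    paperMatrix q *ᵥ Pi.single j 1 = Pi.single (⟨(j : ℕ) + 1, h⟩ : Fin (q - 1)) 1 := by
  funext i
  rw [mulVec_eq hq]
  have hi := i.2
  have hj := j.2
  simp only [Pi.single_apply, Fin.ext_iff]
  by_cases h0 : 0 < (i : ℕ)
  · rw [dif_pos h0]
    split_ifs <;> omega
  · rw [dif_neg h0]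
    split_ifs <;> omega

lemma lastcol (hq : 3 ≤ q) :
    paperMatrix q *ᵥ Pi.single (⟨q - 2, by omega⟩ : Fin (q - 1)) 1 =
      fun i : Fin (q - 1) => (-1) ^ ((i : ℕ) + 1) := by
  funext i
  rw [mulVec_eq hq]
  have hi := i.2
  have h1 : ¬((i : ℕ) - 1 = q - 2) := by omega
  simp [Pi.single_apply, Fin.ext_iff, h1]

lemma pow_single (hq : 3 ≤ q) : ∀ k (hk : k < q - 1),
    (paperMatrix q ^ k) *ᵥ Pi.single (⟨0, by omega⟩ : Fin (q - 1)) 1 =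
      Pi.single (⟨k, hk⟩ : Fin (q - 1)) 1 := by
  intro k
  induction k with
  | zero => intro hk; rw [pow_zero, Matrix.one_mulVec]
  | succ k ih =>
    intro hk
    rw [pow_succ', ← Matrix.mulVec_mulVec, ih (by omega),
      shift hq ⟨k, by omega⟩ (by simpa using hk)]

lemma pow_q_single (hq : 3 ≤ q) (hodd : Odd q) :
    (paperMatrix q ^ q) *ᵥ Pi.single (⟨0, by omega⟩ : Fin (q - 1)) 1 =
      -(Pi.single (⟨0, by omega⟩ : Fin (q - 1)) 1) := by
  have h1 : q = (q - 2) + 1 + 1 := by omega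
  have hev : Even (q - 1) := Nat.Odd.sub_odd hodd odd_one
  have h2 : paperMatrix q ^ q = paperMatrix q ^ (q - 2 + 1 + 1) := congrArg (paperMatrix q ^ ·) h1
  rw [h2, pow_succ', pow_succ', ← Matrix.mulVec_mulVec, ← Matrix.mulVec_mulVec,
    pow_single hq (q - 2) (by omega), lastcol hq]
  funext i
  rw [mulVec_eq hq]
  have hi := i.2
  have hq2 : ((-1 : ℤ)) ^ ((q - 2 : ℕ) + 1) = 1 := by
    have : (q - 2) + 1 = q - 1 := by omega
    rw [this, hev.neg_one_pow]
  simp only [hq2, mul_one, Pi.neg_apply, Pi.single_apply, Fin.ext_iff]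
  by_cases h0 : 0 < (i : ℕ)
  · rw [dif_pos h0, if_neg (by omega)]
    have : (i : ℕ) - 1 + 1 = (i : ℕ) := by omega
    rw [this, pow_succ]
    ring
  · rw [dif_neg h0, if_pos (by omega)]
    have : (i : ℕ) = 0 := by omega
    simp [this]

lemma pow_q (hq : 3 ≤ q) (hodd : Odd q) : paperMatrix q ^ q = -1 := by
  have key : ∀ j : Fin (q - 1),
      (paperMatrix q ^ q) *ᵥ Pi.single j 1 = -(Pi.single j 1) := by
    intro j
    have hj : (j : ℕ) < q - 1 := j.2
    have hsj : Pi.single j (1 : ℤ) =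
        (paperMatrix q ^ (j : ℕ)) *ᵥ Pi.single (⟨0, by omega⟩ : Fin (q - 1)) 1 := by
      rw [pow_single hq (j : ℕ) hj]
    rw [hsj, Matrix.mulVec_mulVec, pow_mul_comm, ← Matrix.mulVec_mulVec,
      pow_q_single hq hodd, Matrix.mulVec_neg, ← hsj]
  ext i j
  have := congrFun (key j) i
  simp only [Matrix.mulVec_single_one, Matrix.col_apply] at this
  rw [this]
  simp [Matrix.neg_apply, Matrix.one_apply, Pi.single_apply, eq_comm]

lemma neg_one_ne_one (hq : 3 ≤ q) : (-1 : Matrix (Fin (q - 1)) (Fin (q - 1)) ℤ) ≠ 1 := by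
  intro h
  have := congrFun (congrFun h ⟨0, by omega⟩) ⟨0, by omega⟩
  simp [Matrix.neg_apply, Matrix.one_apply] at this

end Stmt10Aux

/-- For an odd prime `q`, the matrix above has determinant `1` and
multiplicative order exactly `2q`: `M^(2q) = 1` and `M^d ≠ 1` for `1 ≤ d < 2q`. -/
theorem stmt10 (q : ℕ) (hq : q.Prime) (hodd : Odd q) :
    (paperMatrix q).det = 1 ∧ paperMatrix q ^ (2 * q) = 1 ∧
      ∀ d : ℕ, 1 ≤ d → d < 2 * q → paperMatrix q ^ d ≠ 1 := by
  have hq2 := hq.two_le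
  have hq3 : 3 ≤ q := by
    rcases hodd with ⟨k, hk⟩
    omega
  set M := paperMatrix q with hM
  have hMq : M ^ q = -1 := Stmt10Aux.pow_q hq3 hodd
  have h2q : M ^ (2 * q) = 1 := by
    rw [mul_comm, pow_mul, hMq, neg_one_sq]
  have hev : Even (q - 1) := Nat.Odd.sub_odd hodd odd_one
  refine ⟨?_, h2q, ?_⟩
  · have hdet : M.det ^ q = 1 := by
      rw [← Matrix.det_pow, hMq]
      have : (-1 : Matrix (Fin (q - 1)) (Fin (q - 1)) ℤ) = -(1 : Matrix _ _ ℤ) := by ring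
      rw [this, Matrix.det_neg, Matrix.det_one, Fintype.card_fin, mul_one, hev.neg_one_pow]
    have hunit : IsUnit M.det := IsUnit.of_pow_eq_one hdet (by omega)
    rcases Int.isUnit_iff.mp hunit with h | h
    · exact h
    · exfalso
      rw [h, hodd.neg_one_pow] at hdet
      norm_num at hdet
  · intro d hd1 hd2 h
    set g := Nat.gcd d (2 * q) with hg
    have hg1 : M ^ g = 1 := pow_gcd_eq_one.mpr ⟨h, h2q⟩
    have hgd : g ∣ 2 * q := Nat.gcd_dvd_right d (2 * q)
    have hgle : g ≤ d := Nat.le_of_dvd (by omega) (Nat.gcd_dvd_left d (2 * q))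
    have hgpos : 0 < g := Nat.gcd_pos_of_pos_left _ (by omega)
    by_cases hqg : q ∣ g
    · -- then g = q, so M^q = 1, contradicting M^q = -1
      obtain ⟨t, ht⟩ := hqg
      have htdvd : t ∣ 2 := by
        have : q * t ∣ q * 2 := by rw [← ht, mul_comm q 2]; exact hgd
        exact (mul_dvd_mul_iff_left (by omega : q ≠ 0)).mp this
      have ht1 : t = 1 := by
        have h2 := Nat.le_of_dvd (by norm_num) htdvd
        interval_cases t
        · omega
        · rfl
        · omega
      have : M ^ q = 1 := by rw [← hg1, ht, ht1, mul_one]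
      rw [hMq] at this
      exact Stmt10Aux.neg_one_ne_one hq3 this
    · -- g coprime to q, so g ∣ 2, so M^2 = 1, so M = M^q = -1, contradiction
      have hco : Nat.Coprime g q := (hq.coprime_iff_not_dvd.mpr hqg).symm
      have hg2 : g ∣ 2 := hco.dvd_of_dvd_mul_right hgd
      have hM2 : M ^ 2 = 1 := by
        obtain ⟨s, hs⟩ := hg2
        rw [hs, pow_mul, hg1, one_pow]
      have hMM : M = -1 := by
        obtain ⟨k, hk⟩ := hodd
        calc M = (M ^ 2) ^ k * M := by rw [hM2, one_pow, one_mul]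
        _ = M ^ (2 * k + 1) := by rw [← pow_mul, ← pow_succ]
        _ = M ^ q := by rw [← hk]
        _ = -1 := hMq
      have h10 : M ⟨1, by omega⟩ ⟨0, by omega⟩ = 1 := by
        rw [hM]
        simp [paperMatrix]
      rw [hMM] at h10
      have : ((⟨1, by omega⟩ : Fin (q - 1)) : ℕ) ≠ ((⟨0, by omega⟩ : Fin (q - 1)) : ℕ) := by simp
      simp [Matrix.neg_apply, Matrix.one_apply, Fin.ext_iff] at h10
end
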